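/- arXiv:1710.10112 — 3 statements merged into one kernel-verified Lean document; each statement's English description precedes it below -/
import Mathlib

section
/- For every finite connected graph G on n vertices, c_H(G) ≤ ⌈n/2⌉. -/
/-- A single move in (reflexive) Cops and Robbers: stay put or move to an adjacent vertex. -/
def CRStep {V : Type*} (G : SimpleGraph V) (u v : V) : Prop := u = v ∨ G.Adj u v

/-- The list of the robber's first `n` positions. -/
def robberHist {V : Type*} (r : ℕ → V) (n : ℕ) : List V := (List.range n).map r

/-- `k` cops have a winning strategy in (perfect-information) Cops and Robbers on `G`.
A cop strategy `F` assigns to every history of robber positions the positions of the `k` cops;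
`F []` is the initial placement of the cops, chosen before the robber picks a start vertex,
and consecutive cop positions must be legal moves.  Given a robber trajectory `r`
(every consecutive pair a legal move), the positions of the cops after their `n`-th move are
`F (robberHist r n)`.  The cops win if at some moment (after a cop move or after a robber
move) some cop occupies the robber's current vertex. -/
def CopsWin {V : Type*} (G : SimpleGraph V) (k : ℕ) : Prop :=
  ∃ F : List V → Fin k → V,
    (∀ l x i, CRStep G (F l i) (F (l ++ [x]) i)) ∧
    ∀ r : ℕ → V, (∀ n, CRStep G (r n) (r (n + 1))) →
      ∃ n, ∃ i, F (robberHist r n) i = r n ∨ F (robberHist r (n + 1)) i = r n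

/-- The cop number of `G`: the least number of cops having a winning strategy. -/
noncomputable def copNumber {V : Type*} (G : SimpleGraph V) : ℕ := sInf {k | CopsWin G k}

open Classical in
/-- The first `n` observations made by hyperopic cops using strategy `F` against the robber
trajectory `r`: after the robber's `n`-th move, the cops (positioned at `F` applied to the
previous observations) see the robber (observation `some (r n)`) unless the robber is
adjacent to every cop (observation `none`). -/
noncomputable def hObsList {V : Type*} (G : SimpleGraph V) {k : ℕ}
    (F : List (Option V) → Fin k → V) (r : ℕ → V) : ℕ → List (Option V)
  | 0 => []
  | n + 1 =>
      hObsList G F r n ++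
        [if ∀ i, G.Adj (F (hObsList G F r n) i) (r n) then none else some (r n)]

/-- `k` cops have a winning strategy in Hyperopic Cops and Robbers on `G`: a strategy
`F`, depending only on the history of observations (the robber being invisible exactly
when adjacent to every cop), which guarantees capture against every robber trajectory. -/
def HCopsWin {V : Type*} (G : SimpleGraph V) (k : ℕ) : Prop :=
  ∃ F : List (Option V) → Fin k → V,
    (∀ l o i, CRStep G (F l i) (F (l ++ [o]) i)) ∧
    ∀ r : ℕ → V, (∀ n, CRStep G (r n) (r (n + 1))) →
      ∃ n, ∃ i, F (hObsList G F r n) i = r n ∨ F (hObsList G F r (n + 1)) i = r n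

/-- The hyperopic cop number of `G`: the least number of cops having a winning strategy
in Hyperopic Cops and Robbers. -/
noncomputable def hyperopicCopNumber {V : Type*} (G : SimpleGraph V) : ℕ :=
  sInf {k | HCopsWin G k}

/-! Put the cops on a dominating set with at most `⌈n/2⌉` vertices (one of the two parity classes
of the distance from a fixed vertex), padded to exactly `k = ⌈n/2⌉` vertices. A visible robber is
then on or next to a cop and is caught at once. An invisible robber lies in the common
neighbourhood of the cops, which avoids their `k` vertices and so has at most `n - k ≤ k`
elements: the cops spread over all of it and catch him in the first round as well. -/

namespace SimpleGraph

variable {V : Type*} {G : SimpleGraph V}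

lemma Reachable.exists_adj_dist_add_one {u v : V} (h : G.Reachable u v) (hne : v ≠ u) :
    ∃ w, G.Adj w v ∧ G.dist u w + 1 = G.dist u v := by
  obtain ⟨p, hp⟩ := h.symm.exists_walk_length_eq_dist
  cases p with
  | nil => exact absurd rfl hne
  | cons hadj q =>
    refine ⟨_, hadj.symm, le_antisymm ?_ ?_⟩
    · rw [dist_comm (u := u) (v := v), ← hp, Walk.length_cons, dist_comm]
      exact Nat.add_le_add_right (dist_le q) 1
    · simpa [dist_eq_one_iff_adj.mpr hadj.symm] using hadj.symm.reachable.dist_triangle_right u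

def IsDominating (G : SimpleGraph V) (D : Set V) : Prop :=
  ∀ v, ∃ w ∈ D, w = v ∨ G.Adj w v

lemma IsDominating.mono {D D' : Set V} (hD : G.IsDominating D) (h : D ⊆ D') :
    G.IsDominating D' := fun v ↦
  let ⟨w, hw, hwv⟩ := hD v
  ⟨w, h hw, hwv⟩

lemma Connected.isDominating_setOf_even_dist (hG : G.Connected) (u : V) :
    G.IsDominating {v | Even (G.dist u v)} := by
  intro v
  by_cases hv : Even (G.dist u v)
  · exact ⟨v, hv, .inl rfl⟩
  · have hvu : v ≠ u := by rintro rfl; simp at hv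
    obtain ⟨w, hwv, hw⟩ := (hG u v).exists_adj_dist_add_one hvu
    refine ⟨w, ?_, .inr hwv⟩
    rw [← hw, Nat.even_add_one, not_not] at hv
    exact hv

lemma Connected.isDominating_setOf_odd_dist [Nontrivial V] (hG : G.Connected) (u : V) :
    G.IsDominating {v | ¬Even (G.dist u v)} := by
  intro v
  by_cases hvu : v = u
  · obtain ⟨w, huw⟩ := hG.preconnected.exists_adj_of_nontrivial u
    refine ⟨w, ?_, .inr (hvu ▸ huw.symm)⟩
    simp [dist_eq_one_iff_adj.mpr huw]
  by_cases hv : Even (G.dist u v)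
  · obtain ⟨w, hwv, hw⟩ := (hG u v).exists_adj_dist_add_one hvu
    refine ⟨w, ?_, .inr hwv⟩
    rw [← hw, Nat.even_add_one] at hv
    exact hv
  · exact ⟨v, hv, .inl rfl⟩

lemma Connected.exists_isDominating_ncard_le [Finite V] (hG : G.Connected) :
    ∃ D : Set V, G.IsDominating D ∧ D.ncard ≤ (Nat.card V + 1) / 2 := by
  obtain ⟨u⟩ := hG.nonempty
  set A := {v | Even (G.dist u v)}
  have hcard : A.ncard + Aᶜ.ncard = Nat.card V := Set.ncard_add_ncard_compl A
  by_cases hA : A.ncard ≤ (Nat.card V + 1) / 2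
  · exact ⟨A, hG.isDominating_setOf_even_dist u, hA⟩
  · have : Nontrivial V := Finite.one_lt_card_iff_nontrivial.mp (by omega)
    exact ⟨Aᶜ, hG.isDominating_setOf_odd_dist u, by omega⟩

lemma ncard_setOf_forall_adj_add_ncard_range_le [Finite V] {ι : Type*} (c : ι → V) :
    {v | ∀ i, G.Adj (c i) v}.ncard + (Set.range c).ncard ≤ Nat.card V := by
  have hdisj : Disjoint {v | ∀ i, G.Adj (c i) v} (Set.range c) := by
    rw [Set.disjoint_right]
    rintro _ ⟨i, rfl⟩ h
    exact G.irrefl (h i)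
  rw [← Set.ncard_union_eq hdisj]
  exact Set.ncard_le_card _

end SimpleGraph

lemma Finite.exists_surjective_fin_of_card_le {α : Type*} [Finite α] [Nonempty α] {k : ℕ}
    (h : Nat.card α ≤ k) : ∃ f : Fin k → α, Function.Surjective f := by
  have := Fintype.ofFinite α
  obtain ⟨e⟩ := Function.Embedding.nonempty_of_card_le (β := Fin k)
    (by simpa [Nat.card_eq_fintype_card] using h)
  exact Function.exists_surjective_iff.mpr ⟨⟨fun _ ↦ Classical.arbitrary α⟩, ⟨e⟩⟩

section Hyperopic

variable {V : Type*} {G : SimpleGraph V} {k : ℕ}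

open Classical in
noncomputable def hObs (G : SimpleGraph V) (c : Fin k → V) (v : V) : Option V :=
  if ∀ i, G.Adj (c i) v then none else some v

lemma hCopsWin_of_capture_first_round (c : Fin k → V) (reply : Option V → Fin k → V)
    (hmove : ∀ o i, CRStep G (c i) (reply o i))
    (hcapture : ∀ v, ∃ i, c i = v ∨ reply (hObs G c v) i = v) : HCopsWin G k := by
  let F : List (Option V) → Fin k → V
    | [] => c
    | o :: _ => reply o
  -- the cops' first move is `reply` applied to the first observation `hObs G c (r 0)`
  refine ⟨F, fun l o i ↦ ?_, fun r _ ↦ ⟨0, hcapture (r 0)⟩⟩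
  match l with
  | [] => exact hmove o i
  | _ :: _ => exact .inl rfl

lemma hCopsWin_of_isDominating [Finite V] (c : Fin k → V) (hdom : G.IsDominating (Set.range c))
    (hcommon : {v | ∀ i, G.Adj (c i) v}.ncard ≤ k) : HCopsWin G k := by
  classical
  obtain ⟨cover, hcover_adj, hcover⟩ : ∃ cover : Fin k → V, (∀ i, CRStep G (c i) (cover i)) ∧
      ∀ v, (∀ i, G.Adj (c i) v) → ∃ i, cover i = v := by
    rcases isEmpty_or_nonempty {v | ∀ i, G.Adj (c i) v} with hempty | hne
    · exact ⟨c, fun _ ↦ .inl rfl, fun v hv ↦ (hempty.false ⟨v, hv⟩).elim⟩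
    obtain ⟨f, hf⟩ := Finite.exists_surjective_fin_of_card_le
      (hcommon.trans_eq' (Nat.card_coe_set_eq _))
    refine ⟨fun i ↦ f i, fun i ↦ .inr ((f i).2 i), fun v hv ↦ ?_⟩
    obtain ⟨i, hi⟩ := hf ⟨v, hv⟩
    exact ⟨i, congrArg Subtype.val hi⟩
  refine hCopsWin_of_capture_first_round c
    (fun | none => cover | some v => fun i ↦ if G.Adj (c i) v then v else c i)
    (fun o i ↦ ?_) (fun v ↦ ?_)
  · rcases o with _ | v
    · exact hcover_adj i
    · dsimp only
      split_ifs with h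
      exacts [.inr h, .inl rfl]
  · unfold hObs
    split_ifs with hall
    · obtain ⟨i, hi⟩ := hcover v hall
      exact ⟨i, .inr hi⟩
    · obtain ⟨_, ⟨i, rfl⟩, rfl | hadj⟩ := hdom v
      · exact ⟨i, .inl rfl⟩
      · exact ⟨i, .inr (if_pos hadj)⟩

end Hyperopic

/-- For every finite connected graph `G` on `n` vertices,
`c_H(G) ≤ ⌈n/2⌉`. -/
theorem hyperopicCopNumber_le_half {V : Type*} [Fintype V]
    (G : SimpleGraph V) (hG : G.Connected) :
    hyperopicCopNumber G ≤ (Fintype.card V + 1) / 2 := by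
  set k := (Fintype.card V + 1) / 2
  have hpos : 0 < Fintype.card V := Fintype.card_pos_iff.mpr hG.nonempty
  obtain ⟨D, hdom, hD⟩ := hG.exists_isDominating_ncard_le
  obtain ⟨D', hDD', -, hD'⟩ := Set.exists_subsuperset_card_eq (Set.subset_univ D)
    (n := k) (by rwa [Nat.card_eq_fintype_card] at hD)
    (by rw [Set.ncard_univ, Nat.card_eq_fintype_card]; omega)
  have : Nonempty D' := (Set.nonempty_of_ncard_ne_zero (by omega)).to_subtype
  obtain ⟨f, hf⟩ :=
    Finite.exists_surjective_fin_of_card_le (k := k) (Nat.card_coe_set_eq D' ▸ hD'.le)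
  let c : Fin k → V := fun i ↦ f i
  have hrange : Set.range c = D' := by
    rw [Set.range_comp', hf.range_eq, Set.image_univ, Subtype.range_coe]
  have hcommon := G.ncard_setOf_forall_adj_add_ncard_range_le c
  rw [hrange, hD', Nat.card_eq_fintype_card] at hcommon
  exact Nat.sInf_le (hCopsWin_of_isDominating c (hrange ▸ hdom.mono hDD') (by omega))
end

section
/- If a finite connected graph G has diameter at least 3 and c_H(G) = c(G) + 2, then G contains a triangle or a four-cycle (equivalently, G has girth at most 4). -/
/-!
In a triangle-free graph one extra cop suffices to make hyperopic cops as strong as ordinary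
ones. The extra cop trails a fixed cop `c` of an ordinary winning strategy, always standing on a
neighbour of `c`: it waits while `c` waits and steps onto the vertex `c` just left when `c` moves.
A robber adjacent to every cop would then close a triangle with `c` and the trailing cop, so the
robber is never invisible and the ordinary strategy can be replayed verbatim. Hence
`c_H(G) ≤ c(G) + 1` for every connected triangle-free graph on at least two vertices.
-/

lemma SimpleGraph.cliqueFree_three_of_three_lt_girth {V : Type*} {G : SimpleGraph V}
    (h : 3 < G.girth) : G.CliqueFree 3 := by
  by_contra hG
  rw [not_cliqueFree_iff_top_isContained] at hG
  have h3 : (3 : ℕ∞) ≤ ENat.card (Fin 3) := by simp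
  have hle := hG.girth_le (by rw [← girth_eq_zero, girth_top h3]; decide)
  rw [girth_top h3] at hle
  omega

section CopsAndRobbers

variable {α V : Type*} {G : SimpleGraph V}

open Classical in
/-- The cop trailing `c` from `v₀`, computed on the reversed history so that the latest
observation is the head of the list. -/
noncomputable def trailRev (c : List α → V) (v₀ : V) : List α → V
  | [] => v₀
  | o :: t => if c t.reverse = c (o :: t).reverse then trailRev c v₀ t else c t.reverse

noncomputable def trail (c : List α → V) (v₀ : V) (l : List α) : V :=
  trailRev c v₀ l.reverse

variable {c : List α → V} {v₀ : V}

@[simp]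
lemma trail_nil : trail c v₀ [] = v₀ := rfl

open Classical in
lemma trail_concat (l : List α) (o : α) :
    trail c v₀ (l ++ [o]) = if c l = c (l ++ [o]) then trail c v₀ l else c l := by
  simp [trail, trailRev]

lemma adj_trail (hc : ∀ l o, CRStep G (c l) (c (l ++ [o]))) (h₀ : G.Adj (c []) v₀)
    (l : List α) : G.Adj (c l) (trail c v₀ l) := by
  induction l using List.reverseRecOn with
  | nil => exact h₀
  | append_singleton l o ih =>
    rw [trail_concat]
    split_ifs with hstay
    · rwa [← hstay]
    · exact ((hc l o).resolve_left hstay).symm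

lemma crStep_trail (hc : ∀ l o, CRStep G (c l) (c (l ++ [o]))) (h₀ : G.Adj (c []) v₀)
    (l : List α) (o : α) : CRStep G (trail c v₀ l) (trail c v₀ (l ++ [o])) := by
  rw [trail_concat]
  split_ifs
  · exact Or.inl rfl
  · exact Or.inr (adj_trail hc h₀ l).symm

lemma hObsList_eq_map_some {k : ℕ} {F : List (Option V) → Fin k → V}
    (hvis : ∀ l v, ∃ i, ¬ G.Adj (F l i) v) (r : ℕ → V) (n : ℕ) :
    hObsList G F r n = (robberHist r n).map some := by
  induction n with
  | zero => rfl
  | succ n ih =>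
    have hseen : ¬ ∀ i, G.Adj (F (hObsList G F r n) i) (r n) := by
      obtain ⟨i, hi⟩ := hvis (hObsList G F r n) (r n)
      exact fun h ↦ hi (h i)
    rw [hObsList, if_neg hseen, ih]
    simp [robberHist, List.range_succ]

lemma CopsWin.pos [Nonempty V] {k : ℕ} (h : CopsWin G k) : 0 < k := by
  obtain ⟨F, -, hwin⟩ := h
  obtain ⟨v⟩ := ‹Nonempty V›
  obtain ⟨-, i, -⟩ := hwin (fun _ ↦ v) (fun _ ↦ Or.inl rfl)
  exact i.pos

lemma copsWin_card [Fintype V] : CopsWin G (Fintype.card V) :=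
  ⟨fun _ ↦ (Fintype.equivFin V).symm, fun _ _ _ ↦ Or.inl rfl,
    fun r _ ↦ ⟨0, Fintype.equivFin V (r 0), Or.inl (by simp)⟩⟩

lemma copsWin_copNumber [Fintype V] : CopsWin G (copNumber G) :=
  Nat.sInf_mem (s := {k | CopsWin G k}) ⟨_, copsWin_card⟩

theorem CopsWin.hCopsWin_add_one {k : ℕ} (htf : G.CliqueFree 3)
    (hnbr : ∀ v, ∃ w, G.Adj v w) (h : CopsWin G (k + 1)) : HCopsWin G (k + 2) := by
  classical
  obtain ⟨F₀, hmove, hwin⟩ := h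
  obtain ⟨v₀, hv₀⟩ := hnbr (F₀ [] 0)
  let decode : List (Option V) → List V := List.map (·.getD v₀)
  let c : List (Option V) → V := fun l ↦ F₀ (decode l) 0
  have hc : ∀ l o, CRStep G (c l) (c (l ++ [o])) := fun l o ↦ by
    simpa [c, decode] using hmove (decode l) (o.getD v₀) 0
  let F : List (Option V) → Fin (k + 2) → V := fun l ↦ Fin.snoc (F₀ (decode l)) (trail c v₀ l)
  have hvis : ∀ l v, ∃ i, ¬ G.Adj (F l i) v := by
    intro l v
    by_contra! hall
    have hcop : G.Adj (c l) v := by simpa [F, c] using hall (Fin.castSucc 0)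
    have htrail : G.Adj (trail c v₀ l) v := by simpa [F] using hall (Fin.last _)
    exact htf {c l, trail c v₀ l, v}
      (SimpleGraph.is3Clique_triple_iff.mpr ⟨adj_trail hc hv₀ l, hcop, htrail⟩)
  refine ⟨F, fun l o i ↦ ?_, fun r hr ↦ ?_⟩
  · induction i using Fin.lastCases with
    | last => simpa [F] using crStep_trail hc hv₀ l o
    | cast j => simpa [F, decode] using hmove (decode l) (o.getD v₀) j
  · obtain ⟨n, i, hcapture⟩ := hwin r hr
    refine ⟨n, i.castSucc, ?_⟩
    simpa [F, decode, hObsList_eq_map_some hvis, Function.comp_def] using hcapture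

theorem hyperopicCopNumber_le_copNumber_add_one [Fintype V] [Nontrivial V] (hG : G.Connected)
    (htf : G.CliqueFree 3) : hyperopicCopNumber G ≤ copNumber G + 1 := by
  have hwin : CopsWin G (copNumber G) := copsWin_copNumber
  have := hG.nonempty
  obtain ⟨m, hm⟩ := Nat.exists_eq_succ_of_ne_zero hwin.pos.ne'
  rw [hm] at hwin ⊢
  exact Nat.sInf_le (hwin.hCopsWin_add_one htf hG.preconnected.exists_adj_of_nontrivial)

end CopsAndRobbers

theorem girth_le_four_of_three_le_diam_of_hyperopic_general {V : Type*} [Fintype V]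
    (G : SimpleGraph V) (hG : G.Connected)
    (h : hyperopicCopNumber G = copNumber G + 2) :
    G.girth ≤ 4 := by
  by_contra! hgirth
  have : Nontrivial V := by
    by_contra hV
    have : Subsingleton V := not_nontrivial_iff_subsingleton.mp hV
    simp [Subsingleton.elim G ⊥] at hgirth
  have := hyperopicCopNumber_le_copNumber_add_one hG
    (G.cliqueFree_three_of_three_lt_girth (by omega))
  omega

/-- If a finite connected graph `G` has diameter at least 3 and
`c_H(G) = c(G) + 2`, then `G` contains a triangle or a four-cycle (equivalently,
`G` has girth at most 4). -/
theorem girth_le_four_of_three_le_diam_of_hyperopic {V : Type*} [Fintype V]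
    (G : SimpleGraph V) (hG : G.Connected) (hd : 3 ≤ G.diam)
    (h : hyperopicCopNumber G = copNumber G + 2) :
    G.girth ≤ 4 :=
  girth_le_four_of_three_le_diam_of_hyperopic_general G hG h
end

section
/- If a finite connected graph G has diameter 2, then c_H(G) ≤ min{δ(G) + 1, Δ(G)}, where δ(G) and Δ(G) denote the minimum and maximum degree of G. -/
/-!
Fix a vertex `u`. In a graph of diameter two every vertex is at most one step away from the
open neighbourhood `N(u)`, so cops standing on `N(u)` (or on `N[u]`) catch a visible robber with
their next move. With `δ + 1` cops on `N[u]`, `u` of minimum degree, the robber can only be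
invisible by being adjacent to the cop on `u`, i.e. by standing on a cop.

With `Δ` cops on `N(u)`, `u` of maximum degree, an invisible robber stands on a vertex `v` with
`N(u) ⊆ N(v)`, hence `N(v) = N(u)` by maximality of `deg u`. One cop steps from some `x ∈ N(u)`
to `u`. The robber's next position is `v` or in `N(u)`; either way some cop is adjacent to it, so
if it is seen it is caught. If it stays invisible it is adjacent to `u`, hence in `N(u)`, and the
only vertex of `N(u)` without a cop is `x`, to which that cop returns.
-/

namespace SimpleGraph

variable {V : Type*} {G : SimpleGraph V}

lemma eq_or_adj_or_exists_adj_adj_of_edist_le_two {u w : V} (h : G.edist u w ≤ 2) :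
    u = w ∨ G.Adj u w ∨ ∃ x, G.Adj u x ∧ G.Adj x w := by
  by_cases h2 : G.edist u w = 2
  · obtain ⟨-, -, x, hx⟩ := G.edist_eq_two_iff.mp h2
    rw [mem_commonNeighbors] at hx
    exact Or.inr (Or.inr ⟨x, hx.1, hx.2.symm⟩)
  · have h1 : G.edist u w ≤ 1 := Order.le_of_lt_succ (lt_of_le_of_ne h h2)
    rcases G.edist_le_one_iff_adj_or_eq.mp h1 with hadj | heq
    · exact Or.inr (Or.inl hadj)
    · exact Or.inl heq

lemma edist_le_two_of_diam_eq_two (hd : G.diam = 2) (u w : V) : G.edist u w ≤ 2 := by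
  have hfin : G.ediam ≠ ⊤ := ediam_ne_top_of_diam_ne_zero (by omega)
  calc G.edist u w ≤ G.ediam := edist_le_ediam
    _ = G.diam := (ENat.natCast_toNat hfin).symm
    _ = 2 := by rw [hd]; rfl

lemma exists_adj_crStep_of_diam_eq_two (hd : G.diam = 2) {u w : V} (hne : u ≠ w) :
    ∃ v, G.Adj u v ∧ CRStep G v w := by
  rcases G.eq_or_adj_or_exists_adj_adj_of_edist_le_two (G.edist_le_two_of_diam_eq_two hd u w)
    with h | h | ⟨x, hux, hxw⟩
  · exact absurd h hne
  · exact ⟨w, h, .inl rfl⟩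
  · exact ⟨x, hux, .inr hxw⟩

end SimpleGraph

lemma Finset.exists_fin_enumeration {V : Type*} (s : Finset V) :
    ∃ c : Fin s.card → V, ∀ v, v ∈ s ↔ ∃ i, c i = v :=
  ⟨fun i => s.equivFin.symm i, fun v =>
    ⟨fun hv => ⟨s.equivFin ⟨v, hv⟩, by simp⟩,
      by rintro ⟨i, rfl⟩; exact (s.equivFin.symm i).2⟩⟩

section HyperopicGame

variable {V : Type*} {G : SimpleGraph V} {k : ℕ}

lemma CRStep.refl (v : V) : CRStep G v v := Or.inl rfl

lemma CRStep.symm {u v : V} : CRStep G u v → CRStep G v u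
  | .inl h => .inl h.symm
  | .inr h => .inr h.symm

variable (G) in
open Classical in
noncomputable def observe (c : Fin k → V) (w : V) : Option V :=
  if ∀ i, G.Adj (c i) w then none else some w

lemma hObsList_succ (F : List (Option V) → Fin k → V) (r : ℕ → V) (n : ℕ) :
    hObsList G F r (n + 1) = hObsList G F r n ++ [observe G (F (hObsList G F r n)) (r n)] :=
  rfl

lemma observe_of_forall_adj {c : Fin k → V} {w : V} (h : ∀ i, G.Adj (c i) w) :
    observe G c w = none := by
  classical exact if_pos h

lemma observe_of_not_forall_adj {c : Fin k → V} {w : V} (h : ¬∀ i, G.Adj (c i) w) :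
    observe G c w = some w := by
  classical exact if_neg h

variable (G) in
open Classical in
noncomputable def moveTo (c : Fin k → V) (w : V) : Fin k → V :=
  if h : ∃ i, CRStep G (c i) w then Function.update c h.choose w else c

lemma crStep_moveTo (c : Fin k → V) (w : V) (i : Fin k) : CRStep G (c i) (moveTo G c w i) := by
  unfold moveTo
  split_ifs with h
  · by_cases hi : i = h.choose
    · subst hi; simpa using h.choose_spec
    · simpa [hi] using CRStep.refl (c i)
  · exact CRStep.refl _

lemma exists_moveTo_eq {c : Fin k → V} {w : V} (h : ∃ i, CRStep G (c i) w) :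
    ∃ i, moveTo G c w i = w :=
  ⟨h.choose, by simp [moveTo, h]⟩

lemma exists_capture_of_visible {F : List (Option V) → Fin k → V} {r : ℕ → V} {n : ℕ}
    (hF : F (hObsList G F r n ++ [some (r n)]) = moveTo G (F (hObsList G F r n)) (r n))
    (hvis : ¬∀ i, G.Adj (F (hObsList G F r n) i) (r n))
    (hreach : ∃ i, CRStep G (F (hObsList G F r n) i) (r n)) :
    ∃ i, F (hObsList G F r (n + 1)) i = r n := by
  rw [hObsList_succ, observe_of_not_forall_adj hvis, hF]
  exact exists_moveTo_eq hreach

variable (G) in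
/-- Observation lists are chronological, so this strategy and `probe` below react only to the
first one or two observations. -/
noncomputable def pounce (c : Fin k → V) : List (Option V) → Fin k → V
  | some w :: _ => moveTo G c w
  | _ => c

lemma crStep_pounce (c : Fin k → V) (l : List (Option V)) (o : Option V) (i : Fin k) :
    CRStep G (pounce G c l i) (pounce G c (l ++ [o]) i) := by
  rcases l with _ | ⟨_ | _, _⟩ <;> rcases o with _ | w
  all_goals first | exact CRStep.refl _ | exact crStep_moveTo c w i

theorem hCopsWin_of_dominating (c : Fin k → V) (hdom : ∀ w, ∃ i, CRStep G (c i) w)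
    (hocc : ∀ w, (∀ i, G.Adj (c i) w) → ∃ i, c i = w) : HCopsWin G k := by
  refine ⟨pounce G c, crStep_pounce c, fun r _ => ?_⟩
  by_cases hvis : ∀ i, G.Adj (c i) (r 0)
  · obtain ⟨i, hi⟩ := hocc (r 0) hvis
    exact ⟨0, i, Or.inl hi⟩
  · obtain ⟨i, hi⟩ :=
      exists_capture_of_visible (F := pounce G c) (n := 0) rfl hvis (hdom (r 0))
    exact ⟨0, i, Or.inr hi⟩

variable (G) in
noncomputable def probe (c₀ c₁ : Fin k → V) : List (Option V) → Fin k → V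
  | [none] => c₁
  | none :: some w :: _ => moveTo G c₁ w
  | some w :: _ => moveTo G c₀ w
  | _ => c₀

lemma crStep_probe {c₀ c₁ : Fin k → V} (hstep : ∀ i, CRStep G (c₀ i) (c₁ i))
    (l : List (Option V)) (o : Option V) (i : Fin k) :
    CRStep G (probe G c₀ c₁ l i) (probe G c₀ c₁ (l ++ [o]) i) := by
  rcases l with _ | ⟨_ | _, _ | ⟨_ | _, _⟩⟩ <;> rcases o with _ | w
  all_goals first
    | exact CRStep.refl _
    | exact hstep i
    | exact (hstep i).symm
    | exact crStep_moveTo _ w i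

theorem hCopsWin_of_neighborSet_maximal (u : V) (c₀ : Fin k → V)
    (hc₀ : ∀ v, G.Adj u v ↔ ∃ i, c₀ i = v) (hdom : ∀ w, ∃ i, CRStep G (c₀ i) w)
    (hmax : ∀ v, G.neighborSet u ⊆ G.neighborSet v → G.neighborSet v ⊆ G.neighborSet u)
    {i₁ i₂ : Fin k} (hne : i₁ ≠ i₂) : HCopsWin G k := by
  set c₁ := Function.update c₀ i₁ u
  have hu : G.Adj u (c₀ i₁) := (hc₀ _).mpr ⟨i₁, rfl⟩
  have hstep : ∀ i, CRStep G (c₀ i) (c₁ i) := by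
    intro i
    by_cases hi : i = i₁
    · subst hi
      rw [show c₁ i = u from Function.update_self ..]
      exact Or.inr hu.symm
    · simpa [c₁, hi] using CRStep.refl (c₀ i)
  refine ⟨probe G c₀ c₁, crStep_probe hstep, fun r hr => ?_⟩
  set F := probe G c₀ c₁
  by_cases h₀ : ∀ i, G.Adj (c₀ i) (r 0)
  swap
  · obtain ⟨i, hi⟩ := exists_capture_of_visible (F := F) (n := 0) rfl h₀ (hdom (r 0))
    exact ⟨0, i, Or.inr hi⟩
  have hobs₁ : hObsList G F r 1 = [none] := by
    rw [hObsList_succ]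
    exact congrArg (fun o => [o]) (observe_of_forall_adj h₀)
  have hF₁ : F (hObsList G F r 1) = c₁ := by rw [hobs₁]; rfl
  by_cases h₁ : ∀ i, G.Adj (c₁ i) (r 1)
  · -- the robber is adjacent to `u`, so it stands on `c₀ i`, and only the cop `i₁` has left.
    obtain ⟨i, hi⟩ := (hc₀ (r 1)).mp (by simpa [c₁] using h₁ i₁)
    by_cases hi₁ : i = i₁
    · have hobs₂ : hObsList G F r 2 = [none, none] := by
        rw [hObsList_succ, hF₁, hobs₁, observe_of_forall_adj h₁]; rfl
      refine ⟨1, i, Or.inr ?_⟩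
      rw [hobs₂]
      exact hi
    · refine ⟨1, i, Or.inl ?_⟩
      rw [hF₁]
      simpa [c₁, hi₁] using hi
  · have hreach : ∃ i, CRStep G (c₁ i) (r 1) := by
      rcases hr 0 with h | h
      · exact ⟨i₂, Or.inr (by simpa [c₁, hne.symm, ← h] using h₀ i₂)⟩
      · have hN : G.neighborSet u ⊆ G.neighborSet (r 0) := fun x hx => by
          obtain ⟨i, rfl⟩ := (hc₀ x).mp hx
          exact (h₀ i).symm
        exact ⟨i₁, Or.inr (by simpa [c₁] using hmax (r 0) hN h)⟩
    obtain ⟨i, hi⟩ := exists_capture_of_visible (F := F) (n := 1)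
      (by rw [hF₁, hobs₁]; rfl) (by rwa [hF₁]) (by rwa [hF₁])
    exact ⟨1, i, Or.inr hi⟩

end HyperopicGame

section DiameterTwo

open Finset

variable {V : Type*} [Fintype V] {G : SimpleGraph V} [DecidableRel G.Adj]

lemma SimpleGraph.two_le_maxDegree_of_diam_eq_two (hd : G.diam = 2) : 2 ≤ G.maxDegree := by
  classical
  have : Nonempty V := (G.nontrivial_of_diam_ne_zero (by omega)).to_nonempty
  obtain ⟨a, b, hab⟩ := G.exists_dist_eq_diam
  rw [hd] at hab
  rcases G.eq_or_adj_or_exists_adj_adj_of_edist_le_two (G.edist_le_two_of_diam_eq_two hd a b)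
    with rfl | h | ⟨x, hax, hxb⟩
  · simp at hab
  · simp [G.dist_eq_one_iff_adj.mpr h] at hab
  · have hne : a ≠ b := by rintro rfl; simp at hab
    calc 2 ≤ #{a, b} := (card_pair hne).ge
      _ ≤ #(G.neighborFinset x) := card_le_card (by simp [insert_subset_iff, hax.symm, hxb])
      _ = G.degree x := G.card_neighborFinset_eq_degree x
      _ ≤ G.maxDegree := G.degree_le_maxDegree x

theorem hCopsWin_minDegree_add_one_of_diam_eq_two (hd : G.diam = 2) :
    HCopsWin G (G.minDegree + 1) := by
  classical
  have : Nonempty V := (G.nontrivial_of_diam_ne_zero (by omega)).to_nonempty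
  obtain ⟨u, hu⟩ := G.exists_minimal_degree_vertex
  set s := insert u (G.neighborFinset u)
  obtain ⟨c, hc⟩ := s.exists_fin_enumeration
  have hcard : #s = G.minDegree + 1 := by
    rw [card_insert_of_notMem (G.notMem_neighborFinset_self u), G.card_neighborFinset_eq_degree, hu]
  have hcop : ∀ v ∈ s, ∃ i, c i = v := fun v hv => (hc v).mp hv
  rw [← hcard]
  refine hCopsWin_of_dominating c (fun w => ?_) (fun w hw => ?_)
  · by_cases huw : u = w
    · obtain ⟨i, hi⟩ := hcop u (mem_insert_self _ _)
      exact ⟨i, .inl (hi.trans huw)⟩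
    · obtain ⟨v, huv, hvw⟩ := G.exists_adj_crStep_of_diam_eq_two hd huw
      obtain ⟨i, rfl⟩ := hcop v (mem_insert_of_mem (by simpa))
      exact ⟨i, hvw⟩
  · obtain ⟨i, hi⟩ := hcop u (mem_insert_self _ _)
    exact hcop w (mem_insert_of_mem (by simpa [← hi] using hw i))

theorem hCopsWin_maxDegree_of_diam_eq_two (hd : G.diam = 2) : HCopsWin G G.maxDegree := by
  have : Nonempty V := (G.nontrivial_of_diam_ne_zero (by omega)).to_nonempty
  obtain ⟨u, hu⟩ := G.exists_maximal_degree_vertex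
  obtain ⟨c, hc⟩ := (G.neighborFinset u).exists_fin_enumeration
  have hcard : #(G.neighborFinset u) = G.maxDegree := by rw [G.card_neighborFinset_eq_degree, hu]
  have hc' : ∀ v, G.Adj u v ↔ ∃ i, c i = v := fun v => by rw [← hc, G.mem_neighborFinset]
  have h2 : 1 < #(G.neighborFinset u) := hcard ▸ G.two_le_maxDegree_of_diam_eq_two hd
  set i₁ : Fin #(G.neighborFinset u) := ⟨0, by omega⟩
  set i₂ : Fin #(G.neighborFinset u) := ⟨1, h2⟩
  rw [← hcard]
  refine hCopsWin_of_neighborSet_maximal u c hc' (fun w => ?_) (fun v hv => ?_)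
    (i₁ := i₁) (i₂ := i₂) (by simp [i₁, i₂, Fin.ext_iff])
  · by_cases huw : u = w
    · subst huw
      exact ⟨i₁, .inr ((hc' (c i₁)).mpr ⟨i₁, rfl⟩).symm⟩
    · obtain ⟨v, huv, hvw⟩ := G.exists_adj_crStep_of_diam_eq_two hd huw
      obtain ⟨i, rfl⟩ := (hc' v).mp huv
      exact ⟨i, hvw⟩
  · have hsub : G.neighborFinset u ⊆ G.neighborFinset v := Set.toFinset_subset_toFinset.mpr hv
    have heq := eq_of_subset_of_card_le hsub (by
      rw [G.card_neighborFinset_eq_degree, G.card_neighborFinset_eq_degree, ← hu]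
      exact G.degree_le_maxDegree v)
    rw [← Set.toFinset_subset_toFinset, ← G.neighborFinset_def, ← G.neighborFinset_def, heq]

end DiameterTwo

theorem hyperopicCopNumber_le_of_diam_two_general {V : Type*} [Fintype V]
    (G : SimpleGraph V) [DecidableRel G.Adj] (hd : G.diam = 2) :
    hyperopicCopNumber G ≤ min (G.minDegree + 1) G.maxDegree :=
  le_min (Nat.sInf_le (hCopsWin_minDegree_add_one_of_diam_eq_two hd))
    (Nat.sInf_le (hCopsWin_maxDegree_of_diam_eq_two hd))

/-- If a finite connected graph `G` has diameter 2, then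
`c_H(G) ≤ min {δ(G) + 1, Δ(G)}`. -/
theorem hyperopicCopNumber_le_of_diam_two {V : Type*} [Fintype V]
    (G : SimpleGraph V) [DecidableRel G.Adj] (hG : G.Connected) (hd : G.diam = 2) :
    hyperopicCopNumber G ≤ min (G.minDegree + 1) G.maxDegree :=
  hyperopicCopNumber_le_of_diam_two_general G hd
end
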